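/- A point p ∈ W is χ-semistable if and only if there exists a G-invariant regular function f on W × A^1 of positive degree in the A^1-variable (i.e., f = g(x)z^l with l > 0, invariant for the G-action twisted by χ^{-1} on A^1) such that f(p,1) ≠ 0. -/
import Mathlib


/- STATEMENT 1 (one direction of King's criterion, Lemma 2.4):
G acts on W, χ : G → ℂ* is a character, and G acts on W × 𝔸¹ by
γ · (w, z) = (γ • w, χ(γ)⁻¹ z).  If f(w,z) = g(w) zˡ (with l > 0 and g a regular,
in particular continuous, function on W) is a G-invariant function on W × 𝔸¹ with
f(p, 1) = g(p) ≠ 0, then p is χ-semistable: for every one-parameter subgroup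
λ : ℂ* → G, the closure of the λ-orbit of (p, 1) does not meet W × {0}. -/
theorem semistable_of_invariant_function_nonvanishing
    {G : Type*} [Group G] {W : Type*} [TopologicalSpace W] [MulAction G W]
    [ContinuousConstSMul G W]
    (χ : G →* ℂˣ) (g : W → ℂ) (hg : Continuous g) (l : ℕ) (hl : 0 < l)
    (hinv : ∀ (γ : G) (w : W) (z : ℂ),
      g (γ • w) * ((((χ γ)⁻¹ : ℂˣ) : ℂ) * z) ^ l = g w * z ^ l)
    (p : W) (hp : g p ≠ 0)
    (lam : ℂˣ →* G) :
    ∀ w : W, (w, (0 : ℂ)) ∉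
      closure {q : W × ℂ | ∃ t : ℂˣ, q = (lam t • p, (((χ (lam t))⁻¹ : ℂˣ) : ℂ))} := by
  intro w hw
  set F : W × ℂ → ℂ := fun q => g q.1 * q.2 ^ l with hF
  have hFc : Continuous F := (hg.comp continuous_fst).mul (continuous_snd.pow l)
  have hsub : {q : W × ℂ | ∃ t : ℂˣ, q = (lam t • p, (((χ (lam t))⁻¹ : ℂˣ) : ℂ))}
      ⊆ F ⁻¹' {g p} := by
    rintro q ⟨t, rfl⟩
    have := hinv (lam t) p 1
    simpa [F] using this
  have hclosed : IsClosed (F ⁻¹' {g p}) := IsClosed.preimage hFc isClosed_singleton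
  have := (closure_minimal hsub hclosed) hw
  simp only [Set.mem_preimage, Set.mem_singleton_iff, F] at this
  rw [zero_pow hl.ne', mul_zero] at this
  exact hp this.symm
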